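/- If G is a pseudo-connected graph, then every eigenvalue of L(G) is a strictly positive eigenvalue of the Laplacian L(Ĝ) of its lifted graph, and lies in (0, 2·d(G°) + 1]. -/

import Mathlib

/-- The Laplacian of a graph with self-loops: the Laplacian of the self-loop-free
part `G°` plus `e_i e_iᵀ` for each self-loop `(i,i)`, encoded as loop set `s`. -/
def loopLaplacian {N : ℕ} (G : SimpleGraph (Fin N)) [DecidableRel G.Adj]
    (s : Finset (Fin N)) : Matrix (Fin N) (Fin N) ℝ :=
  G.lapMatrix ℝ + Matrix.diagonal (fun i => if i ∈ s then 1 else 0)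

/-- The lifted graph of a graph with self-loops `(G, s)` on `N` vertices: a simple
graph on `2N + 1` vertices (two copies of the vertex set plus a middle vertex).
Each non-loop edge `(i,j)` yields edges `(i,j)` and `(i+N+1, j+N+1)`; each
self-loop `(i,i)` yields edges `(i, N+1)` and `(N+1, i+N+1)`, where `N+1` denotes
the middle vertex. -/
def liftedGraph {N : ℕ} (G : SimpleGraph (Fin N)) (s : Finset (Fin N)) :
    SimpleGraph (Fin N ⊕ Unit ⊕ Fin N) where
  Adj a b :=
    match a, b with
    | Sum.inl i, Sum.inl j => G.Adj i j
    | Sum.inl i, Sum.inr (Sum.inl _) => i ∈ s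
    | Sum.inr (Sum.inl _), Sum.inl i => i ∈ s
    | Sum.inr (Sum.inl _), Sum.inr (Sum.inr i) => i ∈ s
    | Sum.inr (Sum.inr i), Sum.inr (Sum.inl _) => i ∈ s
    | Sum.inr (Sum.inr i), Sum.inr (Sum.inr j) => G.Adj i j
    | _, _ => False
  symm := by
    constructor
    rintro (i | u | i) (j | v | j) h <;>
      first | exact h.symm | exact h | cases h
  loopless := by
    constructor
    rintro (i | u | i) h <;> first | exact G.irrefl h | cases h

noncomputable instance {N : ℕ} (G : SimpleGraph (Fin N)) (s : Finset (Fin N)) :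
    DecidableRel (liftedGraph G s).Adj := Classical.decRel _

/-- The Laplacian of the lifted graph (an ordinary loopless graph Laplacian). -/
noncomputable def liftedLaplacian {N : ℕ} (G : SimpleGraph (Fin N))
    (s : Finset (Fin N)) : Matrix (Fin N ⊕ Unit ⊕ Fin N) (Fin N ⊕ Unit ⊕ Fin N) ℝ :=
  (liftedGraph G s).lapMatrix ℝ

/-- A graph with self-loops (simple graph `G` with loop set `s`) is pseudo-connected
if every vertex is incident to an edge and every connected component contains a
vertex with a self-loop. -/
def PseudoConnected {N : ℕ} (G : SimpleGraph (Fin N)) (s : Finset (Fin N)) : Prop :=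
  (∀ v, v ∈ s ∨ ∃ u, G.Adj v u) ∧ (∀ v, ∃ u ∈ s, G.Reachable v u)


/-!
The quadratic form of `L(G)` is that of the Laplacian of `G°` plus `∑_{i ∈ s} v_i²`; it vanishes
only on vectors that are constant on components and zero at the loops, so pseudo-connectedness
makes `L(G)` positive definite. Gershgorin's theorem bounds every eigenvalue by
`2 deg(k) + 1 ≤ 2 d(G°) + 1`. Finally, an eigenvector `v` of `L(G)` lifts to the eigenvector
`(v, 0, -v)` of `L(Ĝ)`: the middle vertex sees `v_i` and `-v_i` for every loop `i`, which cancel.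
-/

open Finset Matrix

theorem SimpleGraph.lapMatrix_mulVec_apply_eq_sum_adj {V R : Type*} [Fintype V] [DecidableEq V]
    [NonAssocRing R] (G : SimpleGraph V) [DecidableRel G.Adj] (x : V → R) (a : V) :
    (G.lapMatrix R *ᵥ x) a = ∑ b, if G.Adj a b then x a - x b else 0 := by
  rw [G.lapMatrix_mulVec_apply, ← sum_filter, ← G.neighborFinset_eq_filter, sum_sub_distrib,
    sum_const, card_neighborFinset_eq_degree, nsmul_eq_mul]

theorem Matrix.PosDef.pos_of_mulVec_eq_smul {n : Type*} [Fintype n] {A : Matrix n n ℝ}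
    (hA : A.PosDef) {μ : ℝ} {v : n → ℝ} (hv : v ≠ 0) (h : A *ᵥ v = μ • v) : 0 < μ := by
  have hAv := hA.dotProduct_mulVec_pos hv
  rw [h, star_trivial, dotProduct_smul, smul_eq_mul] at hAv
  exact pos_of_mul_pos_left hAv (dotProduct_self_star_nonneg v)

section
variable {N : ℕ} (G : SimpleGraph (Fin N)) [DecidableRel G.Adj] (s : Finset (Fin N))

theorem loopLaplacian_mulVec_apply (x : Fin N → ℝ) (i : Fin N) :
    (loopLaplacian G s *ᵥ x) i = (G.lapMatrix ℝ *ᵥ x) i + if i ∈ s then x i else 0 := by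
  simp [loopLaplacian, add_mulVec, mulVec_diagonal]

theorem dotProduct_loopLaplacian_mulVec (x : Fin N → ℝ) :
    x ⬝ᵥ (loopLaplacian G s *ᵥ x) = x ⬝ᵥ (G.lapMatrix ℝ *ᵥ x) + ∑ i ∈ s, x i ^ 2 := by
  simp only [dotProduct, loopLaplacian_mulVec_apply, mul_add, sum_add_distrib, mul_ite, mul_zero,
    ← sum_filter, filter_mem_eq_inter, univ_inter, sq]

theorem loopLaplacian_posDef (hs : ∀ v, ∃ u ∈ s, G.Reachable v u) :
    (loopLaplacian G s).PosDef := by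
  refine .of_dotProduct_mulVec_pos ((G.isHermitian_lapMatrix ℝ).add (isHermitian_diagonal _))
    fun x hx => ?_
  rw [star_trivial, dotProduct_loopLaplacian_mulVec]
  have hlap : 0 ≤ x ⬝ᵥ (G.lapMatrix ℝ *ᵥ x) := by
    simpa using (G.posSemidef_lapMatrix ℝ).dotProduct_mulVec_nonneg x
  have hloops : 0 ≤ ∑ i ∈ s, x i ^ 2 := sum_nonneg fun i _ => sq_nonneg (x i)
  refine lt_of_le_of_ne (add_nonneg hlap hloops) fun h0 => hx ?_
  have hconst : ∀ i j, G.Reachable i j → x i = x j :=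
    (G.lapMatrix_toLinearMap₂'_apply'_eq_zero_iff_forall_reachable x).mp
      (by rw [toLinearMap₂'_apply']; linarith)
  have hzero : ∀ i ∈ s, x i = 0 := fun i hi =>
    pow_eq_zero_iff two_ne_zero |>.mp <|
      (sum_eq_zero_iff_of_nonneg fun i _ => sq_nonneg (x i)).mp (by linarith) i hi
  funext j
  obtain ⟨u, hu, hju⟩ := hs j
  rw [hconst j u hju, hzero u hu, Pi.zero_apply]

theorem loopLaplacian_apply_self (k : Fin N) :
    loopLaplacian G s k k = G.degree k + if k ∈ s then 1 else 0 := by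
  simp [loopLaplacian, SimpleGraph.lapMatrix, SimpleGraph.degMatrix]

theorem sum_erase_norm_loopLaplacian (k : Fin N) :
    ∑ j ∈ univ.erase k, ‖loopLaplacian G s k j‖ = G.degree k := by
  rw [G.degree_eq_sum_if_adj (R := ℝ), ← sum_erase univ (a := k) (by simp)]
  refine sum_congr rfl fun j hj => ?_
  simp [loopLaplacian, SimpleGraph.lapMatrix, SimpleGraph.degMatrix, SimpleGraph.adjMatrix_apply,
    (ne_of_mem_erase hj).symm, apply_ite]

theorem le_two_mul_maxDegree_add_one_of_mulVec_eq_smul {μ : ℝ} {v : Fin N → ℝ} (hv : v ≠ 0)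
    (h : loopLaplacian G s *ᵥ v = μ • v) : μ ≤ 2 * G.maxDegree + 1 := by
  have hμ : Module.End.HasEigenvalue (toLin' (loopLaplacian G s)) μ :=
    Module.End.hasEigenvalue_of_hasEigenvector ⟨by simpa [Module.End.mem_eigenspace_iff], hv⟩
  obtain ⟨k, hk⟩ := eigenvalue_mem_ball hμ
  rw [loopLaplacian_apply_self, sum_erase_norm_loopLaplacian, Metric.mem_closedBall,
    Real.dist_eq] at hk
  have hdeg : (G.degree k : ℝ) ≤ G.maxDegree := by exact_mod_cast G.degree_le_maxDegree k
  have hloop : (if k ∈ s then 1 else 0 : ℝ) ≤ 1 := by split_ifs <;> norm_num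
  linarith [le_of_abs_le hk]

theorem liftedLaplacian_mulVec_sumElim (x y : Fin N → ℝ) :
    liftedLaplacian G s *ᵥ Sum.elim x (Sum.elim 0 y) =
      Sum.elim (loopLaplacian G s *ᵥ x)
        (Sum.elim (fun _ => -∑ i ∈ s, (x i + y i)) (loopLaplacian G s *ᵥ y)) := by
  funext a
  rw [liftedLaplacian, SimpleGraph.lapMatrix_mulVec_apply_eq_sum_adj, Fintype.sum_sum_type,
    Fintype.sum_sum_type]
  rcases a with i | _ | i <;> simp only [Sum.elim_inl, Sum.elim_inr]
  · rw [loopLaplacian_mulVec_apply, G.lapMatrix_mulVec_apply_eq_sum_adj]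
    congr 1
    -- the two `if`s decide the same proposition through different `Decidable` instances
    · exact sum_congr rfl fun j _ => by by_cases h : G.Adj i j <;> simp [liftedGraph, h]
    · simp [liftedGraph]
  · simp [liftedGraph, sum_add_distrib, add_comm]
  · rw [sum_eq_zero fun j _ => by simp [liftedGraph], zero_add, add_comm,
      loopLaplacian_mulVec_apply, G.lapMatrix_mulVec_apply_eq_sum_adj]
    congr 1
    · exact sum_congr rfl fun j _ => by by_cases h : G.Adj i j <;> simp [liftedGraph, h]
    · simp [liftedGraph]

end

/-- If `G` is pseudo-connected, then every eigenvalue of `L(G)` is a strictly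
positive eigenvalue of the Laplacian of the lifted graph `Ĝ` and lies in
`(0, 2·d(G°) + 1]`. -/
theorem loopLaplacian_spectrum_subset_of_pseudoConnected
    {N : ℕ} (G : SimpleGraph (Fin N)) [DecidableRel G.Adj]
    (s : Finset (Fin N)) (hpc : PseudoConnected G s)
    (μ : ℝ) (v : Fin N → ℝ) (hv : v ≠ 0)
    (heig : (loopLaplacian G s).mulVec v = μ • v) :
    (∃ w : Fin N ⊕ Unit ⊕ Fin N → ℝ, w ≠ 0 ∧
        (liftedLaplacian G s).mulVec w = μ • w) ∧
      μ ∈ Set.Ioc (0 : ℝ) (2 * G.maxDegree + 1) := by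
  set w : Fin N ⊕ Unit ⊕ Fin N → ℝ := Sum.elim v (Sum.elim 0 (-v))
  have hw : w ≠ 0 := fun h => hv (funext fun i => congrFun h (Sum.inl i))
  have hweig : liftedLaplacian G s *ᵥ w = μ • w := by
    rw [liftedLaplacian_mulVec_sumElim, mulVec_neg, heig]
    funext a
    rcases a with i | _ | i <;> simp [w]
  exact ⟨⟨w, hw, hweig⟩, (loopLaplacian_posDef G s hpc.2).pos_of_mulVec_eq_smul hv heig,
    le_two_mul_maxDegree_add_one_of_mulVec_eq_smul G s hv heig⟩
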